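/- arXiv:1910.13161 — 2 statements merged into one kernel-verified Lean document; each statement's English description precedes it below -/
import Mathlib

section
/- Let H be a ring, and let H = ⨁_{i∈J} H_i be a direct sum decomposition into left H-submodules with projections p_i : H → H_i. If φ : H → H is an automorphism of H as a left H-module that commutes with every projection p_i (i.e., φ ∘ p_i = p_i ∘ φ for all i), and H = ⨁_{i∈J} H'_i is another decomposition with H'_i ≅ H_i as left H-modules for all i, then under the assumption that every left H-module automorphism of H commutes with all p_i, the projections of the two decompositions coincide: p_i = p'_i for all i. -/
/-- If a family of submodules is internal, then any finite family of elements of the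
submodules summing to zero is identically zero. -/
theorem aux_zero {R M : Type*} [Ring R] [AddCommGroup M] [Module R M]
    {J : Type*} [Fintype J] [DecidableEq J] (A : J → Submodule R M)
    (h : DirectSum.IsInternal A) (v : J → M) (hv : ∀ i, v i ∈ A i)
    (hs : ∑ i, v i = 0) : ∀ i, v i = 0 := by
  intro i
  have hd : (∑ j, DirectSum.lof R J (fun j => A j) j ⟨v j, hv j⟩) = 0 := by
    apply h.injective
    rw [map_sum, map_zero]
    simpa [DirectSum.lof_eq_of, DirectSum.coeLinearMap_of] using hs
  have h2 := congrArg (DirectSum.component R J (fun j => ↥(A j)) i) hd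
  rw [map_sum, map_zero, Finset.sum_eq_single i
    (fun j _ hj => by rw [DirectSum.component.of, dif_neg hj]) (by simp)] at h2
  rw [DirectSum.component.of, dif_pos rfl] at h2
  exact Subtype.ext_iff.mp h2

/-- Projections associated to an internal decomposition kill the other summands. -/
theorem aux_proj {R M : Type*} [Ring R] [AddCommGroup M] [Module R M]
    {J : Type*} [Fintype J] [DecidableEq J] (A : J → Submodule R M)
    (h : DirectSum.IsInternal A) (p : J → (M →ₗ[R] M))
    (hmem : ∀ i x, p i x ∈ A i) (hsum : ∑ i, p i = LinearMap.id) :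
    ∀ i j, i ≠ j → ∀ x ∈ A j, p i x = 0 := by
  intro i j hij x hx
  set v : J → M := fun l => p l x - (if l = j then x else 0) with hv
  have hvmem : ∀ l, v l ∈ A l := by
    intro l
    by_cases hl : l = j
    · subst hl; simpa [hv] using Submodule.sub_mem _ (hmem l x) hx
    · simpa [hv, hl] using hmem l x
  have hvsum : ∑ l, v l = 0 := by
    have : ∑ l, p l x = x := by
      rw [← LinearMap.sum_apply, hsum]; rfl
    simp [hv, Finset.sum_sub_distrib, this]
  have := aux_zero A h v hvmem hvsum i
  simpa [hv, hij] using this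

/-- Let `H` be a finite-dimensional algebra over a field `k`, and let
`H = ⨁_{i ∈ J} H_i` be a direct sum decomposition into left `H`-submodules with
(H-linear) projections `p i : H → H`, `range (p i) ⊆ H i`, acting as the identity on
`H i`, and summing to the identity.  Assume that every left `H`-module automorphism of
`H` commutes with every projection `p i`.  If `H = ⨁_{i ∈ J} H'_i` is another
decomposition, with projections `p' i`, such that `H'_i ≅ H_i` as left `H`-modules for
each `i`, then the projections of the two decompositions coincide: `p i = p' i`. -/
theorem stmt1 {k H : Type*} [Field k] [Ring H] [Algebra k H] [FiniteDimensional k H]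
    {J : Type*} [Fintype J] [DecidableEq J]
    (Hi Hi' : J → Submodule H H)
    (hdec : DirectSum.IsInternal Hi) (hdec' : DirectSum.IsInternal Hi')
    (p p' : J → (H →ₗ[H] H))
    (hmem : ∀ i x, p i x ∈ Hi i) (hid : ∀ i, ∀ x ∈ Hi i, p i x = x)
    (hsum : ∑ i, p i = LinearMap.id)
    (hmem' : ∀ i x, p' i x ∈ Hi' i) (hid' : ∀ i, ∀ x ∈ Hi' i, p' i x = x)
    (hsum' : ∑ i, p' i = LinearMap.id)
    (hiso : ∀ i, Nonempty (↥(Hi' i) ≃ₗ[H] ↥(Hi i)))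
    (hcomm : ∀ (φ : H ≃ₗ[H] H) (i : J),
      (φ : H →ₗ[H] H) ∘ₗ p i = p i ∘ₗ (φ : H →ₗ[H] H)) :
    ∀ i, p i = p' i := by
  classical
  -- choose the isomorphisms
  set e : ∀ i, (↥(Hi' i) ≃ₗ[H] ↥(Hi i)) := fun i => Classical.choice (hiso i) with he
  -- the candidate automorphism
  set φlin : H →ₗ[H] H :=
    ∑ i, (Hi i).subtype ∘ₗ (e i).toLinearMap ∘ₗ
      LinearMap.codRestrict (Hi' i) (p' i) (hmem' i) with hφ
  have hφapp : ∀ x, φlin x = ∑ i, ((e i ⟨p' i x, hmem' i x⟩ : Hi i) : H) := by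
    intro x
    rw [hφ, LinearMap.sum_apply]
    rfl
  have hdecx : ∀ x : H, ∑ i, p i x = x := by
    intro x; rw [← LinearMap.sum_apply, hsum]; rfl
  have hdecx' : ∀ x : H, ∑ i, p' i x = x := by
    intro x; rw [← LinearMap.sum_apply, hsum']; rfl
  have hproj := aux_proj Hi hdec p hmem hsum
  have hproj' := aux_proj Hi' hdec' p' hmem' hsum'
  -- value of φlin on a summand
  have hφon : ∀ j y (hy : y ∈ Hi' j), φlin y = ((e j ⟨y, hy⟩ : Hi j) : H) := by
    intro j y hy
    rw [hφapp]
    rw [Finset.sum_eq_single j]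
    · congr 2
      exact Subtype.ext (hid' j y hy)
    · intro l _ hl
      have : p' l y = 0 := hproj' l j hl y hy
      have hz : (⟨p' l y, hmem' l y⟩ : Hi' l) = 0 := Subtype.ext this
      rw [hz, map_zero, ZeroMemClass.coe_zero]
    · simp
  -- injectivity
  have hinj : Function.Injective φlin := by
    rw [injective_iff_map_eq_zero]
    intro x hx
    rw [hφapp] at hx
    have h0 := aux_zero Hi hdec _ (fun i => (e i ⟨p' i x, hmem' i x⟩ : Hi i).2) hx
    have hp0 : ∀ i, p' i x = 0 := by
      intro i
      have h1 : (⟨p' i x, hmem' i x⟩ : Hi' i) = 0 := by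
        apply (e i).injective
        rw [map_zero]
        exact Subtype.ext (h0 i)
      exact congrArg Subtype.val h1
    rw [← hdecx' x]
    simp [hp0]
  -- surjectivity
  have hsurj : Function.Surjective φlin := by
    intro y
    refine ⟨∑ i, (((e i).symm ⟨p i y, hmem i y⟩ : Hi' i) : H), ?_⟩
    rw [map_sum]
    have : ∀ i, φlin (((e i).symm ⟨p i y, hmem i y⟩ : Hi' i) : H) = p i y := by
      intro i
      rw [hφon i _ ((e i).symm ⟨p i y, hmem i y⟩).2]
      rw [show (⟨(((e i).symm ⟨p i y, hmem i y⟩ : Hi' i) : H), _⟩ : Hi' i)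
          = (e i).symm ⟨p i y, hmem i y⟩ from Subtype.ext rfl]
      rw [LinearEquiv.apply_symm_apply]
    rw [Finset.sum_congr rfl (fun i _ => this i)]
    exact hdecx y
  set φ : H ≃ₗ[H] H := LinearEquiv.ofBijective φlin ⟨hinj, hsurj⟩ with hφeq
  have hφcoe : (φ : H →ₗ[H] H) = φlin := rfl
  have hcommφ : ∀ i, ∀ x, φlin (p i x) = p i (φlin x) := by
    intro i x
    have := hcomm φ i
    rw [hφcoe] at this
    exact LinearMap.ext_iff.mp this x
  -- the key: p i and p' i agree on every summand Hi' j
  have key : ∀ i j, ∀ y ∈ Hi' j, p i y = p' i y := by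
    intro i j y hy
    by_cases hij : i = j
    · subst hij
      rw [hid' i y hy]
      -- show p i y = y
      apply hinj
      rw [hcommφ i y, hφon i y hy, hid i _ (e i ⟨y, hy⟩).2]
    · rw [hproj' i j hij y hy]
      -- show p i y = 0
      apply hinj
      rw [hcommφ i y, hφon j y hy, hproj i j hij _ (e j ⟨y, hy⟩).2, map_zero]
  intro i
  apply LinearMap.ext
  intro x
  have h5 : p i x = ∑ j, p i (p' j x) := by
    rw [← map_sum, hdecx' x]
  rw [h5, Finset.sum_congr rfl (fun j _ => key i j (p' j x) (hmem' j x)),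
    ← map_sum, hdecx' x]
end

section
/- Let H be a finite-dimensional Hopf algebra over a field k such that the trivial module 𝟙 is projective. Then every H-module is projective, and hence H is semisimple. -/
/-!
A left integral `Λ` with `ε Λ = 1` makes Maschke's averaging work: if `p` is a `k`-linear
retraction onto an `H`-submodule, then `∑ Λ₁ • p (S Λ₂ • -)` is an `H`-linear one, so `H` is
semisimple and every `H`-module is projective. Such a `Λ` is the image of `1` under an `H`-linear
section of the counit `H → 𝟙`, which exists because `𝟙` is projective.
The average is `H`-linear because of the identity `(h ⊗ 1) Δ'Λ = (1 ⊗ h) Δ'Λ` in `H ⊗ Hᵐᵒᵖ`,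
where `Δ' x = ∑ x₁ ⊗ S x₂` is multiplicative and `h ⊗ 1 = ∑ (1 ⊗ h₂) Δ' h₁`.
-/

/-- The trivial `H`-module structure on `k`: `H` acts on `k` through the counit
(which is an algebra homomorphism `H →ₐ[k] k` for a bialgebra `H`). -/
noncomputable def trivialModule (k H : Type*) [CommRing k] [Ring H] [Bialgebra k H] :
    Module H k :=
  Module.compHom k (Bialgebra.counitAlgHom k H).toRingHom

open Coalgebra HopfAlgebra TensorProduct MulOpposite

section Sandwich

variable {k A V W : Type*} [CommSemiring k] [Semiring A] [Algebra k A]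
  [AddCommMonoid V] [Module k V] [Module A V] [IsScalarTower k A V]
  [AddCommMonoid W] [Module k W] [Module A W] [IsScalarTower k A W]

variable (A) in
noncomputable def sandwich (f : V →ₗ[k] W) : A ⊗[k] Aᵐᵒᵖ →ₗ[k] V →ₗ[k] W :=
  TensorProduct.lift <| LinearMap.mk₂ k
    (fun a b => Algebra.lsmul k k W a ∘ₗ f ∘ₗ Algebra.lsmul k k V b.unop)
    (fun _ _ _ => by simp only [map_add, LinearMap.add_comp])
    (fun _ _ _ => by simp only [map_smul, LinearMap.smul_comp])
    (fun _ _ _ => by simp only [unop_add, map_add, LinearMap.comp_add])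
    (fun _ _ _ => by simp only [unop_smul, map_smul, LinearMap.comp_smul])

@[simp]
theorem sandwich_tmul (f : V →ₗ[k] W) (a : A) (b : Aᵐᵒᵖ) (v : V) :
    sandwich A f (a ⊗ₜ b) v = a • f (b.unop • v) :=
  rfl

theorem sandwich_tmul_one_mul (f : V →ₗ[k] W) (a : A) (x : A ⊗[k] Aᵐᵒᵖ) (v : V) :
    sandwich A f ((a ⊗ₜ 1) * x) v = a • sandwich A f x v := by
  induction x with
  | zero => simp
  | tmul b c => simp [mul_smul]
  | add x y hx hy => simp [mul_add, hx, hy]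

theorem sandwich_one_tmul_mul (f : V →ₗ[k] W) (b : A) (x : A ⊗[k] Aᵐᵒᵖ) (v : V) :
    sandwich A f ((1 ⊗ₜ op b) * x) v = sandwich A f x (b • v) := by
  induction x with
  | zero => simp
  | tmul a c => simp [mul_smul]
  | add x y hx hy => simp [mul_add, hx, hy]

end Sandwich

namespace HopfAlgebra

section Bialgebra

variable {k H : Type*} [CommSemiring k] [Semiring H] [Bialgebra k H]

variable (k) in
def IsLeftIntegral (Λ : H) : Prop := ∀ h : H, h * Λ = counit (R := k) h • Λ

end Bialgebra

theorem exists_isLeftIntegral_of_projective_trivialModule {k H : Type*} [CommRing k] [Ring H]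
    [Bialgebra k H] (hproj : letI := trivialModule k H; Module.Projective H k) :
    ∃ Λ : H, IsLeftIntegral k Λ ∧ counit (R := k) Λ = 1 := by
  let := trivialModule k H
  have smul_def (h : H) (c : k) : h • c = counit (R := k) h * c := rfl
  let counitH : H →ₗ[H] k :=
    { toFun := counit (R := k)
      map_add' := map_add _
      map_smul' := fun h x => by simp [smul_def] }
  have counitH_surj : Function.Surjective counitH := fun c =>
    ⟨algebraMap k H c, Bialgebra.counit_algebraMap c⟩
  obtain ⟨s, hs⟩ := Module.projective_lifting_property counitH LinearMap.id counitH_surj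
  have s_apply (c : k) : s c = c • s 1 :=
    calc s c = s (algebraMap k H c • 1) := by rw [smul_def, Bialgebra.counit_algebraMap, mul_one]
      _ = c • s 1 := by rw [map_smul, smul_eq_mul, ← Algebra.smul_def]
  refine ⟨s 1, fun h => ?_, congr($hs 1)⟩
  rw [← smul_eq_mul, ← map_smul, smul_def, mul_one, s_apply]

variable {k H : Type*} [CommSemiring k] [Semiring H] [HopfAlgebra k H]

variable (k H) in
/-- `x ↦ ∑ x₁ ⊗ S x₂` is multiplicative once the second factor is `Hᵐᵒᵖ`, as `S` is an
antihomomorphism. -/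
noncomputable def comulAntipode : H →ₐ[k] H ⊗[k] Hᵐᵒᵖ :=
  (Algebra.TensorProduct.map (AlgHom.id k H) (antipodeAlgHomOp k H)).comp
    (Bialgebra.comulAlgHom k H)

theorem comulAntipode_apply {ι : Type*} {x : H} (𝓡 : Repr k x ι) :
    comulAntipode k H x = ∑ i ∈ 𝓡.index, 𝓡.left i ⊗ₜ op (antipode k (𝓡.right i)) := by
  simp [comulAntipode, ← 𝓡.eq, map_sum]

theorem tmul_one_eq_sum_mul_comulAntipode {ι : Type*} {h : H} (𝓡 : Repr k h ι) :
    h ⊗ₜ[k] (1 : Hᵐᵒᵖ) =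
      ∑ i ∈ 𝓡.index, (1 ⊗ₜ op (𝓡.right i)) * comulAntipode k H (𝓡.left i) := by
  let Φ : H ⊗[k] (H ⊗[k] H) →ₗ[k] H ⊗[k] Hᵐᵒᵖ := LinearMap.lTensor H
    ((opLinearEquiv k).toLinearMap ∘ₗ LinearMap.mul' k H ∘ₗ map (antipode k) LinearMap.id)
  have hcoassoc :=
    congr(Φ $(sum_tmul_tmul_eq 𝓡 (fun i => ℛ k (𝓡.left i)) (fun i => ℛ k (𝓡.right i))))
  simp only [map_sum, Φ, LinearMap.lTensor_tmul, LinearMap.comp_apply, TensorProduct.map_tmul,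
    LinearMap.id_apply, LinearMap.mul'_apply, LinearEquiv.coe_coe, coe_opLinearEquiv] at hcoassoc
  simp only [comulAntipode_apply (ℛ k _), Finset.mul_sum, Algebra.TensorProduct.tmul_mul_tmul,
    one_mul, ← op_mul]
  rw [hcoassoc]
  simp only [← tmul_sum, ← Finset.op_sum, sum_antipode_mul_eq_smul, op_smul, op_one, tmul_smul]
  have hcounit := congr(LinearMap.lTensor H (Algebra.linearMap k Hᵐᵒᵖ) $(sum_tmul_counit_eq 𝓡))
  simp only [map_sum, LinearMap.lTensor_tmul, Algebra.linearMap_apply, map_one,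
    Algebra.algebraMap_eq_smul_one, tmul_smul] at hcounit
  exact hcounit.symm

theorem IsLeftIntegral.tmul_one_mul_comulAntipode {Λ : H} (hΛ : IsLeftIntegral k Λ) (h : H) :
    (h ⊗ₜ[k] (1 : Hᵐᵒᵖ)) * comulAntipode k H Λ = (1 ⊗ₜ op h) * comulAntipode k H Λ := by
  rw [tmul_one_eq_sum_mul_comulAntipode (ℛ k h), Finset.sum_mul]
  simp_rw [mul_assoc, ← map_mul, hΛ _, map_smul, mul_smul_comm]
  conv_rhs => rw [← sum_counit_smul (ℛ k h), Finset.op_sum, tmul_sum, Finset.sum_mul]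
  refine Finset.sum_congr rfl fun i _ => ?_
  rw [op_smul, tmul_smul, smul_mul_assoc]

section Maschke

variable {V W : Type*} [AddCommMonoid V] [Module k V] [Module H V] [IsScalarTower k H V]
  [AddCommMonoid W] [Module k W] [Module H W] [IsScalarTower k H W]

noncomputable def IsLeftIntegral.average {Λ : H} (hΛ : IsLeftIntegral k Λ) (f : V →ₗ[k] W) :
    V →ₗ[H] W where
  toFun := sandwich H f (comulAntipode k H Λ)
  map_add' := map_add _
  map_smul' h v := by
    rw [RingHom.id_apply, ← sandwich_one_tmul_mul, ← hΛ.tmul_one_mul_comulAntipode,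
      sandwich_tmul_one_mul]

theorem IsLeftIntegral.average_apply {Λ : H} (hΛ : IsLeftIntegral k Λ) (f : V →ₗ[k] W) (v : V) :
    hΛ.average f v =
      ∑ i ∈ (ℛ k Λ).index, (ℛ k Λ).left i • f (antipode k ((ℛ k Λ).right i) • v) := by
  simp [average, comulAntipode_apply (ℛ k Λ)]

end Maschke

theorem IsLeftIntegral.isSemisimpleModule {k H V : Type*} [Field k] [Ring H] [HopfAlgebra k H]
    [AddCommGroup V] [Module k V] [Module H V] [IsScalarTower k H V]
    {Λ : H} (hΛ : IsLeftIntegral k Λ) (hΛ₁ : counit (R := k) Λ = 1) : IsSemisimpleModule H V where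
  exists_isCompl N := by
    obtain ⟨p, hp⟩ := LinearMap.exists_leftInverse_of_injective
      (N.subtype.restrictScalars k) (by simp)
    refine ⟨LinearMap.ker (hΛ.average p), LinearMap.isCompl_of_proj fun n => ?_⟩
    have hpN (v : V) (hv : v ∈ N) : p v = ⟨v, hv⟩ := congr($hp ⟨v, hv⟩)
    ext
    simp only [hΛ.average_apply, Submodule.coe_sum, Submodule.coe_smul, hpN _ (N.smul_mem _ n.2),
      ← mul_smul, ← Finset.sum_smul, sum_mul_antipode_eq_smul, hΛ₁, one_smul]

end HopfAlgebra

theorem stmt9_general (k H : Type*) [Field k] [Ring H] [HopfAlgebra k H]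
    (hproj : letI := trivialModule k H; Module.Projective H k) :
    (∀ (M : Type*) [AddCommGroup M] [Module H M], Module.Projective H M) ∧
      IsSemisimpleRing H := by
  obtain ⟨Λ, hΛ, hΛ₁⟩ := exists_isLeftIntegral_of_projective_trivialModule hproj
  have : IsSemisimpleRing H := hΛ.isSemisimpleModule hΛ₁
  exact ⟨fun M _ _ => Module.projective_of_isSemisimpleRing H M, this⟩

/-- Let `H` be a finite-dimensional Hopf algebra over a field `k` such
that the trivial module `𝟙` (i.e. `k` with `H`-action through the counit) is projective.
Then every `H`-module is projective, and hence `H` is semisimple. -/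
theorem stmt9 (k H : Type*) [Field k] [Ring H] [HopfAlgebra k H] [FiniteDimensional k H]
    (hproj : letI := trivialModule k H; Module.Projective H k) :
    (∀ (M : Type*) [AddCommGroup M] [Module H M], Module.Projective H M) ∧
      IsSemisimpleRing H :=
  stmt9_general k H hproj
end
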